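/- arXiv:math/0410135 — 2 statements merged into one kernel-verified Lean document; each statement's English description precedes it below -/
import Mathlib

section
/- Let z = (z_1, …, z_N) be an infinitesimally rigid crystal and let M = {(θ z_i + η)_{i=1}^N : θ ∈ SO(d), η ∈ ℝ^d} ⊂ (ℝ^d)^N. Then there exists δ > 0 such that H(x) > H(z) for every x ∈ (ℝ^d)^N with 0 < dist(x, M) ≤ δ, where dist(x, M) = inf_{y ∈ M} (Σ_{i=1}^N |x_i − y_i|²)^{1/2}; that is, z is rigid. -/
open Matrix

/-- The action of a `d × d` real matrix on `ℝ^d` (Euclidean space). -/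
noncomputable def matAct {d : ℕ} (X : Matrix (Fin d) (Fin d) ℝ)
    (v : EuclideanSpace ℝ (Fin d)) : EuclideanSpace ℝ (Fin d) :=
  Matrix.toEuclideanLin X v

/-- `z` is a crystal: distinct particles are either at distance exactly `a`
(neighboring pairs) or at distance `> b`. -/
def IsCrystal {d N : ℕ} (a b : ℝ) (z : Fin N → EuclideanSpace ℝ (Fin d)) : Prop :=
  ∀ i j : Fin N, i ≠ j → ‖z i - z j‖ = a ∨ b < ‖z i - z j‖

/-- The quadratic form ℰ₁(h) = (č/a²) Σ_{⟨i,j⟩} ⟨h_i − h_j, z_i − z_j⟩², the sum being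
over neighboring pairs. -/
noncomputable def E1form {d N : ℕ} (a c : ℝ) (z h : Fin N → EuclideanSpace ℝ (Fin d)) : ℝ :=
  (c / a ^ 2) * ∑ i : Fin N, ∑ j : Fin N,
    if i < j ∧ ‖z i - z j‖ = a then (inner ℝ (h i - h j) (z i - z j) : ℝ) ^ 2 else 0

/-- ℰ₂(h) = (č²/a⁴) Σ_i |Σ_{j : ⟨i,j⟩} ⟨h_i − h_j, z_i − z_j⟩ (z_i − z_j)|². -/
noncomputable def E2form {d N : ℕ} (a c : ℝ) (z h : Fin N → EuclideanSpace ℝ (Fin d)) : ℝ :=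
  (c ^ 2 / a ^ 4) * ∑ i : Fin N,
    ‖∑ j : Fin N, if i ≠ j ∧ ‖z i - z j‖ = a then
        (inner ℝ (h i - h j) (z i - z j) : ℝ) • (z i - z j) else 0‖ ^ 2

/-- ‖∇h‖₂² = Σ_{⟨i,j⟩} |h_i − h_j|² (sum over neighboring pairs). -/
noncomputable def gradSq {d N : ℕ} (a : ℝ) (z h : Fin N → EuclideanSpace ℝ (Fin d)) : ℝ :=
  ∑ i : Fin N, ∑ j : Fin N, if i < j ∧ ‖z i - z j‖ = a then ‖h i - h j‖ ^ 2 else 0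

/-- Membership in H_z = {(X z_i + v)_i : X ∈ so(d), v ∈ ℝ^d}. -/
def InHz {d N : ℕ} (z h : Fin N → EuclideanSpace ℝ (Fin d)) : Prop :=
  ∃ X : Matrix (Fin d) (Fin d) ℝ, Xᵀ = -X ∧
    ∃ v : EuclideanSpace ℝ (Fin d), ∀ i, h i = matAct X (z i) + v

/-- Membership in H_z^⊥, the orthogonal complement of H_z for the inner product
⟨h, h'⟩ = Σ_i ⟨h_i, h'_i⟩. -/
def InHzPerp {d N : ℕ} (z h : Fin N → EuclideanSpace ℝ (Fin d)) : Prop :=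
  ∀ g : Fin N → EuclideanSpace ℝ (Fin d), InHz z g →
    ∑ i : Fin N, (inner ℝ (h i) (g i) : ℝ) = 0

/-- The crystal `z` is infinitesimally rigid: ℰ₁(h) = 0 holds exactly for h ∈ H_z. -/
def InfRigid {d N : ℕ} (a b c : ℝ) (z : Fin N → EuclideanSpace ℝ (Fin d)) : Prop :=
  IsCrystal a b z ∧ ∀ h : Fin N → EuclideanSpace ℝ (Fin d), E1form a c z h = 0 ↔ InHz z h

/-- The Hamiltonian H(x) = Σ_{1≤i<j≤N} U(|x_i − x_j|). -/
noncomputable def Ham {d N : ℕ} (U : ℝ → ℝ) (x : Fin N → EuclideanSpace ℝ (Fin d)) : ℝ :=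
  ∑ i : Fin N, ∑ j : Fin N, if i < j then U ‖x i - x j‖ else 0

/-- Membership in the special orthogonal group SO(d). -/
def IsSO {d : ℕ} (θ : Matrix (Fin d) (Fin d) ℝ) : Prop :=
  θ * θᵀ = 1 ∧ θ.det = 1

/-- The manifold M = {(θ z_i + η)_i : θ ∈ SO(d), η ∈ ℝ^d} of configurations isometric
to z (orientation preservingly). -/
def orbitM {d N : ℕ} (z : Fin N → EuclideanSpace ℝ (Fin d)) :
    Set (Fin N → EuclideanSpace ℝ (Fin d)) :=
  {y | ∃ (θ : Matrix (Fin d) (Fin d) ℝ) (η : EuclideanSpace ℝ (Fin d)),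
    IsSO θ ∧ ∀ i, y i = matAct θ (z i) + η}

/-- dist(x, M) = inf_{y ∈ M} (Σ_i |x_i − y_i|²)^{1/2}. -/
noncomputable def distToOrbit {d N : ℕ} (z x : Fin N → EuclideanSpace ℝ (Fin d)) : ℝ :=
  sInf {r : ℝ | ∃ y ∈ orbitM z, r = Real.sqrt (∑ i : Fin N, ‖x i - y i‖ ^ 2)}

/-!
Move `x` by a rigid motion so that `z` becomes a nearest point of the orbit `M`; the first-order
condition for this minimum puts `h = x - z` in `H_z^⊥`, where infinitesimal rigidity and
compactness of the unit sphere give `ℰ₁(h) ≥ λ‖h‖²`. Suppose `H(x) ≤ H(z)`. Bonds sit at the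
minimum of `U` and distant pairs stay out of its range, so no pair energy can decrease; hence none
changes, and uniqueness of the minimiser forces every bond to keep its length `a`. But then
`⟨hᵢ - hⱼ, zᵢ - zⱼ⟩ = -|hᵢ - hⱼ|²/2` on bonds, so `ℰ₁(h) = O(‖h‖⁴)`, contradicting the lower
bound once `0 < ‖h‖` is small.
-/

open NormedSpace Filter Topology

lemma sum_norm_sub_centroid_sq_le {E : Type*} [NormedAddCommGroup E] [InnerProductSpace ℝ E]
    {N : ℕ} (c : Fin N → E) (η : E) :
    ∑ i, ‖c i - (N : ℝ)⁻¹ • ∑ j, c j‖ ^ 2 ≤ ∑ i, ‖c i - η‖ ^ 2 := by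
  rcases Nat.eq_zero_or_pos N with rfl | hN
  · simp
  set m := (N : ℝ)⁻¹ • ∑ j, c j
  have hsum : ∑ i, (c i - m) = 0 := by
    rw [Finset.sum_sub_distrib, Finset.sum_const, Finset.card_univ, Fintype.card_fin,
      ← Nat.cast_smul_eq_nsmul ℝ, smul_inv_smul₀ (by positivity), sub_self]
  have hsplit (i : Fin N) :
      ‖c i - η‖ ^ 2 = ‖c i - m‖ ^ 2 + 2 * inner ℝ (c i - m) (m - η) + ‖m - η‖ ^ 2 := by
    rw [← norm_add_sq_real, sub_add_sub_cancel]
  have hcross : ∑ i, 2 * inner ℝ (c i - m) (m - η) = 0 := by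
    rw [← Finset.mul_sum, ← sum_inner, hsum, inner_zero_left, mul_zero]
  simp only [hsplit, Finset.sum_add_distrib, hcross, add_zero]
  exact le_add_of_nonneg_right (by positivity)

lemma real_inner_eq_neg_half_norm_sq_of_norm_add_eq {E : Type*} [NormedAddCommGroup E]
    [InnerProductSpace ℝ E] {u w : E} (h : ‖u + w‖ = ‖u‖) : inner ℝ w u = -(‖w‖ ^ 2 / 2) := by
  have := norm_add_sq_real u w
  rw [h, real_inner_comm] at this
  linarith

lemma norm_le_sqrt_sum_norm_sq {E : Type*} [SeminormedAddCommGroup E] {N : ℕ} (h : Fin N → E) :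
    ‖h‖ ≤ Real.sqrt (∑ i, ‖h i‖ ^ 2) :=
  (pi_norm_le_iff_of_nonneg (Real.sqrt_nonneg _)).2 fun i =>
    Real.le_sqrt_of_sq_le (Finset.single_le_sum (f := fun j => ‖h j‖ ^ 2)
      (fun j _ => by positivity) (Finset.mem_univ i))

lemma exists_pos_mul_norm_sq_le_of_homogeneous {E : Type*} [NormedAddCommGroup E]
    [NormedSpace ℝ E] [ProperSpace E] {S : Set E} (hS : IsClosed S)
    (hS_smul : ∀ (t : ℝ), ∀ h ∈ S, t • h ∈ S) {q : E → ℝ} (hq : Continuous q)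
    (hq_smul : ∀ (t : ℝ) (h : E), q (t • h) = t ^ 2 * q h) (hq_pos : ∀ h ∈ S, h ≠ 0 → 0 < q h) :
    ∃ lam > 0, ∀ h ∈ S, lam * ‖h‖ ^ 2 ≤ q h := by
  have hq0 : q 0 = 0 := by simpa using hq_smul 0 0
  have hK : IsCompact (S ∩ Metric.sphere 0 1) := (isCompact_sphere 0 1).inter_left hS
  rcases (S ∩ Metric.sphere 0 1).eq_empty_or_nonempty with hempty | hne
  · refine ⟨1, one_pos, fun h hh => ?_⟩
    obtain rfl : h = 0 := by
      by_contra h0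
      refine hempty.subset ⟨hS_smul ‖h‖⁻¹ h hh, ?_⟩
      simp [norm_smul, h0]
    simp [hq0]
  obtain ⟨u, ⟨huS, hu1⟩, hmin⟩ := hK.exists_isMinOn hne hq.continuousOn
  have hu0 : u ≠ 0 := by rintro rfl; simp at hu1
  refine ⟨q u, hq_pos u huS hu0, fun h hh => ?_⟩
  rcases eq_or_ne h 0 with rfl | h0
  · simp [hq0]
  have hh1 : ‖h‖⁻¹ • h ∈ S ∩ Metric.sphere 0 1 :=
    ⟨hS_smul _ h hh, by simp [norm_smul, h0]⟩
  have key := isMinOn_iff.1 hmin _ hh1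
  rwa [hq_smul, inv_pow, ← div_eq_inv_mul, le_div_iff₀ (by positivity)] at key

lemma eventually_forall_two_mul_lt_sub {ι : Type*} [Finite ι] (r : ι → ι → ℝ) (b : ℝ) :
    ∀ᶠ δ in 𝓝 (0 : ℝ), ∀ i j, b < r i j → 2 * δ < r i j - b := by
  refine Filter.eventually_all.2 fun i => Filter.eventually_all.2 fun j => ?_
  by_cases hij : b < r i j
  · filter_upwards [ContinuousAt.eventually_lt (by fun_prop) continuousAt_const
      (by simpa using hij : 2 * (0 : ℝ) < r i j - b)] with δ hδ _ using hδ
  · exact Filter.Eventually.of_forall fun _ h => absurd h hij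

lemma HasCompactSupport.eq_zero_of_sInf_lt {U : ℝ → ℝ} (hU : HasCompactSupport U) {s : ℝ}
    (hs : sInf {r | 0 < r ∧ ∀ t, r < t → U t = 0} < s) : U s = 0 := by
  obtain ⟨R, hR⟩ := hU.isBounded.subset_closedBall 0
  have hmem : max R 1 ∈ {r | 0 < r ∧ ∀ t, r < t → U t = 0} := by
    refine ⟨by positivity, fun t ht => image_eq_zero_of_notMem_tsupport fun htU => ?_⟩
    have := abs_le.1 (by simpa using hR htU)
    linarith [le_max_left R 1]
  obtain ⟨r, ⟨-, hr⟩, hrs⟩ := exists_lt_of_csInf_lt ⟨_, hmem⟩ hs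
  exact hr s hrs

section MatAct

variable {d : ℕ}

lemma matAct_one (v : EuclideanSpace ℝ (Fin d)) : matAct 1 v = v := by
  simp [matAct]

lemma matAct_mul (A B : Matrix (Fin d) (Fin d) ℝ) (v : EuclideanSpace ℝ (Fin d)) :
    matAct (A * B) v = matAct A (matAct B v) := by
  simp [matAct, Matrix.toLpLin_apply, Matrix.mulVec_mulVec]

lemma matAct_add (A : Matrix (Fin d) (Fin d) ℝ) (u v : EuclideanSpace ℝ (Fin d)) :
    matAct A (u + v) = matAct A u + matAct A v :=
  map_add _ u v

lemma matAct_sub (A : Matrix (Fin d) (Fin d) ℝ) (u v : EuclideanSpace ℝ (Fin d)) :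
    matAct A (u - v) = matAct A u - matAct A v :=
  map_sub _ u v

lemma inner_matAct_left (A : Matrix (Fin d) (Fin d) ℝ) (u v : EuclideanSpace ℝ (Fin d)) :
    inner ℝ (matAct A u) v = inner ℝ u (matAct Aᵀ v) := by
  rw [matAct, matAct, ← Matrix.conjTranspose_eq_transpose_of_trivial,
    Matrix.toEuclideanLin_conjTranspose_eq_adjoint, LinearMap.adjoint_inner_right]

lemma norm_matAct_of_transpose_mul_self {θ : Matrix (Fin d) (Fin d) ℝ} (hθ : θᵀ * θ = 1)
    (v : EuclideanSpace ℝ (Fin d)) : ‖matAct θ v‖ = ‖v‖ := by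
  rw [norm_eq_sqrt_real_inner, norm_eq_sqrt_real_inner, inner_matAct_left, ← matAct_mul, hθ,
    matAct_one]

lemma isSO_iff_mem_specialOrthogonalGroup {θ : Matrix (Fin d) (Fin d) ℝ} :
    IsSO θ ↔ θ ∈ Matrix.specialOrthogonalGroup (Fin d) ℝ := by
  rw [Matrix.mem_specialOrthogonalGroup_iff, Matrix.mem_orthogonalGroup_iff]
  rfl

lemma IsSO.transpose_mul_self {θ : Matrix (Fin d) (Fin d) ℝ} (hθ : IsSO θ) : θᵀ * θ = 1 :=
  mul_eq_one_comm.mp hθ.1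

lemma IsSO.mul {θ ψ : Matrix (Fin d) (Fin d) ℝ} (hθ : IsSO θ) (hψ : IsSO ψ) : IsSO (θ * ψ) :=
  isSO_iff_mem_specialOrthogonalGroup.2 <|
    Submonoid.mul_mem _ (isSO_iff_mem_specialOrthogonalGroup.1 hθ)
      (isSO_iff_mem_specialOrthogonalGroup.1 hψ)

open scoped Matrix.Norms.Elementwise in
lemma isCompact_setOf_isSO : IsCompact {θ : Matrix (Fin d) (Fin d) ℝ | IsSO θ} := by
  refine Metric.isCompact_of_isClosed_isBounded ?_ ?_
  · exact (isClosed_eq (continuous_id.matrix_mul continuous_id.matrix_transpose)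
      continuous_const).inter (isClosed_eq continuous_id.matrix_det continuous_const)
  · refine (Metric.isBounded_closedBall (x := 0) (r := 1)).subset fun θ hθ => ?_
    rw [Metric.mem_closedBall, dist_zero_right]
    exact entrywise_sup_norm_bound_of_unitary (isSO_iff_mem_specialOrthogonalGroup.1 hθ).1

lemma isSO_exp_smul {X : Matrix (Fin d) (Fin d) ℝ} (hX : Xᵀ = -X) (t : ℝ) :
    IsSO (exp (t • X)) := by
  have hcomm (s : ℝ) : Commute (s • X) (-(s • X)) := (Commute.refl _).neg_right
  have horth (s : ℝ) : exp (s • X) * (exp (s • X))ᵀ = 1 := by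
    rw [← Matrix.exp_transpose, Matrix.transpose_smul, hX, smul_neg,
      ← Matrix.exp_add_of_commute _ _ (hcomm s), add_neg_cancel, exp_zero]
  refine ⟨horth t, ?_⟩
  -- `exp (t • X)` is the square of `exp ((t / 2) • X)`, so its determinant is `≥ 0`, hence `1`.
  have hsq : exp (t • X) = exp ((t / 2) • X) * exp ((t / 2) • X) := by
    rw [← Matrix.exp_add_of_commute _ _ (Commute.refl _), ← add_smul, add_halves]
  have hdet_sq (s : ℝ) : (exp (s • X)).det * (exp (s • X)).det = 1 := by
    simpa [Matrix.det_mul, Matrix.det_transpose] using congrArg Matrix.det (horth s)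
  have hnonneg : 0 ≤ (exp (t • X)).det := by
    rw [hsq, Matrix.det_mul]
    exact mul_self_nonneg _
  nlinarith [hdet_sq t]

open scoped Matrix.Norms.Operator in
lemma hasDerivAt_matAct_exp_smul (X : Matrix (Fin d) (Fin d) ℝ) (v : EuclideanSpace ℝ (Fin d)) :
    HasDerivAt (fun t : ℝ => matAct (exp (t • X)) v) (matAct X v) 0 := by
  have hexp : HasDerivAt (fun t : ℝ => exp (t • X)) X 0 := by
    have := hasDerivAt_exp_smul_const (𝕂 := ℝ) X (0 : ℝ)
    rwa [zero_smul, exp_zero, one_mul] at this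
  let L := LinearMap.toContinuousLinearMap
    ((Matrix.toEuclideanLin (𝕜 := ℝ) (m := Fin d) (n := Fin d)).toLinearMap.flip v)
  exact L.hasFDerivAt.comp_hasDerivAt 0 hexp

end MatAct

section Orbit

variable {d N : ℕ}

lemma rigid_motion_mem_orbitM {z y : Fin N → EuclideanSpace ℝ (Fin d)} (hy : y ∈ orbitM z)
    {θ : Matrix (Fin d) (Fin d) ℝ} (hθ : IsSO θ) (η : EuclideanSpace ℝ (Fin d)) :
    (fun i => matAct θ (y i) + η) ∈ orbitM z := by
  obtain ⟨ψ, μ, hψ, hy⟩ := hy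
  refine ⟨θ * ψ, matAct θ μ + η, hθ.mul hψ, fun i => ?_⟩
  simp only [hy i, matAct_add, matAct_mul, add_assoc]

lemma exists_isMinOn_orbitM (z x : Fin N → EuclideanSpace ℝ (Fin d)) :
    ∃ y₀ ∈ orbitM z, IsMinOn (fun y => ∑ i, ‖x i - y i‖ ^ 2) (orbitM z) y₀ := by
  -- For a fixed rotation `θ`, the best translation is the centroid of `x - θ z`.
  let η : Matrix (Fin d) (Fin d) ℝ → EuclideanSpace ℝ (Fin d) :=
    fun θ => (N : ℝ)⁻¹ • ∑ j, (x j - matAct θ (z j))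
  let G : Matrix (Fin d) (Fin d) ℝ → ℝ := fun θ => ∑ i, ‖x i - (matAct θ (z i) + η θ)‖ ^ 2
  have hact (v : EuclideanSpace ℝ (Fin d)) : Continuous fun θ : Matrix (Fin d) (Fin d) ℝ =>
      matAct θ v :=
    LinearMap.continuous_of_finiteDimensional
      ((Matrix.toEuclideanLin (𝕜 := ℝ) (m := Fin d) (n := Fin d)).toLinearMap.flip v)
  have hG : Continuous G := by fun_prop
  obtain ⟨θ₀, hθ₀, hθ₀min⟩ :=
    isCompact_setOf_isSO.exists_isMinOn ⟨1, isSO_iff_mem_specialOrthogonalGroup.2 (one_mem _)⟩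
      hG.continuousOn
  refine ⟨fun i => matAct θ₀ (z i) + η θ₀, ⟨θ₀, η θ₀, hθ₀, fun i => rfl⟩, isMinOn_iff.2 ?_⟩
  rintro y ⟨θ, μ, hθ, hy⟩
  obtain rfl : y = _ := funext hy
  calc G θ₀ ≤ G θ := hθ₀min hθ
    _ ≤ ∑ i, ‖x i - (matAct θ (z i) + μ)‖ ^ 2 := by
      simpa only [G, η, sub_add_eq_sub_sub] using
        sum_norm_sub_centroid_sq_le (fun j => x j - matAct θ (z j)) μ

lemma distToOrbit_eq_of_isMinOn {z x y₀ : Fin N → EuclideanSpace ℝ (Fin d)}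
    (hy₀ : y₀ ∈ orbitM z) (hmin : IsMinOn (fun y => ∑ i, ‖x i - y i‖ ^ 2) (orbitM z) y₀) :
    distToOrbit z x = Real.sqrt (∑ i, ‖x i - y₀ i‖ ^ 2) := by
  refine IsLeast.csInf_eq ⟨⟨y₀, hy₀, rfl⟩, ?_⟩
  rintro r ⟨y, hy, rfl⟩
  exact Real.sqrt_le_sqrt (hmin hy)

lemma norm_matAct_transpose_sub_sub {θ : Matrix (Fin d) (Fin d) ℝ} (hθ : IsSO θ)
    (v w η : EuclideanSpace ℝ (Fin d)) :
    ‖matAct θᵀ (v - η) - w‖ = ‖v - (matAct θ w + η)‖ := by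
  rw [← norm_matAct_of_transpose_mul_self hθ.transpose_mul_self, matAct_sub, ← matAct_mul,
    hθ.1, matAct_one]
  congr 1
  abel

lemma exists_congruent_isMinOn_orbitM (z x : Fin N → EuclideanSpace ℝ (Fin d)) :
    ∃ x' : Fin N → EuclideanSpace ℝ (Fin d), (∀ i j, ‖x' i - x' j‖ = ‖x i - x j‖) ∧
      IsMinOn (fun y => ∑ i, ‖x' i - y i‖ ^ 2) (orbitM z) z ∧
      distToOrbit z x = Real.sqrt (∑ i, ‖x' i - z i‖ ^ 2) := by
  obtain ⟨y₀, hy₀, hmin⟩ := exists_isMinOn_orbitM z x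
  obtain ⟨θ, η, hθ, hy₀_eq⟩ := id hy₀
  have hy₀' : y₀ = fun i => matAct θ (z i) + η := funext hy₀_eq
  refine ⟨fun i => matAct θᵀ (x i - η), fun i j => ?_, isMinOn_iff.2 fun y hy => ?_, ?_⟩
  · rw [← matAct_sub, norm_matAct_of_transpose_mul_self (by simpa using hθ.1)]
    congr 1
    abel
  · simp only [norm_matAct_transpose_sub_sub hθ]
    simpa [hy₀'] using hmin (rigid_motion_mem_orbitM hy hθ η)
  · simp only [distToOrbit_eq_of_isMinOn hy₀ hmin, norm_matAct_transpose_sub_sub hθ, hy₀']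

lemma inHzPerp_sub_of_isMinOn {z x : Fin N → EuclideanSpace ℝ (Fin d)}
    (hmin : IsMinOn (fun y => ∑ i, ‖x i - y i‖ ^ 2) (orbitM z) z) : InHzPerp z (x - z) := by
  rintro g ⟨X, hX, v, hg⟩
  obtain rfl : g = _ := funext hg
  -- `t ↦ exp (t X) z + t v` is a curve in the orbit through `z` with velocity `X z + v`.
  let w : ℝ → Fin N → EuclideanSpace ℝ (Fin d) :=
    fun t i => x i - (matAct (exp (t • X)) (z i) + t • v)
  have hw0 : w 0 = x - z := by ext1 i; simp [w, matAct_one]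
  have hw (i : Fin N) : HasDerivAt (fun t => w t i) (0 - (matAct X (z i) + v)) 0 :=
    (hasDerivAt_const (0 : ℝ) (x i)).sub ((hasDerivAt_matAct_exp_smul X (z i)).add
      (by simpa using (hasDerivAt_id (0 : ℝ)).smul_const v))
  have hφ : HasDerivAt (fun t => ∑ i, inner ℝ (w t i) (w t i))
      (∑ i, (inner ℝ (w 0 i) (0 - (matAct X (z i) + v)) +
        inner ℝ (0 - (matAct X (z i) + v)) (w 0 i))) 0 :=
    HasDerivAt.fun_sum fun i _ => (hw i).inner ℝ (hw i)
  have hloc : IsLocalMin (fun t => ∑ i, inner ℝ (w t i) (w t i)) 0 := by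
    refine Filter.Eventually.of_forall fun t => ?_
    have := isMinOn_iff.1 hmin _ ⟨exp (t • X), t • v, isSO_exp_smul hX t, fun i => rfl⟩
    simpa [real_inner_self_eq_norm_sq, w, matAct_one] using this
  have h := hloc.hasDerivAt_eq_zero hφ
  simp only [hw0, Pi.sub_apply, zero_sub, inner_neg_right, real_inner_comm (x _ - z _),
    ← two_mul, ← Finset.mul_sum] at h
  simpa using h

end Orbit

section Coercivity

variable {d N : ℕ}

lemma InHzPerp.smul {z h : Fin N → EuclideanSpace ℝ (Fin d)} (hh : InHzPerp z h) (t : ℝ) :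
    InHzPerp z (t • h) := by
  intro g hg
  simp only [Pi.smul_apply, real_inner_smul_left, ← Finset.mul_sum, hh g hg, mul_zero]

lemma isClosed_setOf_inHzPerp (z : Fin N → EuclideanSpace ℝ (Fin d)) :
    IsClosed {h | InHzPerp z h} := by
  simp only [InHzPerp, Set.ofPred_forall]
  exact isClosed_iInter fun g => isClosed_iInter fun _ =>
    isClosed_eq (by fun_prop) continuous_const

lemma eq_zero_of_inHz_of_inHzPerp {z h : Fin N → EuclideanSpace ℝ (Fin d)} (h₁ : InHz z h)
    (h₂ : InHzPerp z h) : h = 0 := by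
  have := h₂ h h₁
  simp only [real_inner_self_eq_norm_sq] at this
  ext1 i
  simpa using (Finset.sum_eq_zero_iff_of_nonneg fun i _ => by positivity).1 this i
    (Finset.mem_univ i)

lemma E1form_nonneg {a c : ℝ} (hc : 0 ≤ c) (z h : Fin N → EuclideanSpace ℝ (Fin d)) :
    0 ≤ E1form a c z h := by
  unfold E1form
  positivity

lemma E1form_smul (a c : ℝ) (z : Fin N → EuclideanSpace ℝ (Fin d)) (t : ℝ)
    (h : Fin N → EuclideanSpace ℝ (Fin d)) :
    E1form a c z (t • h) = t ^ 2 * E1form a c z h := by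
  simp only [E1form, Pi.smul_apply, ← smul_sub, real_inner_smul_left, mul_pow, Finset.mul_sum,
    mul_ite, mul_zero]
  ring_nf

lemma continuous_E1form (a c : ℝ) (z : Fin N → EuclideanSpace ℝ (Fin d)) :
    Continuous (E1form a c z) := by
  unfold E1form
  exact continuous_const.mul <| continuous_finsetSum _ fun i _ => continuous_finsetSum _
    fun j _ => continuous_if_const _ (fun _ => by fun_prop) fun _ => continuous_const

lemma exists_pos_mul_norm_sq_le_E1form {a c : ℝ} (hc : 0 ≤ c)
    {z : Fin N → EuclideanSpace ℝ (Fin d)} (hz : ∀ h, E1form a c z h = 0 → InHz z h) :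
    ∃ lam > 0, ∀ h, InHzPerp z h → lam * ‖h‖ ^ 2 ≤ E1form a c z h :=
  exists_pos_mul_norm_sq_le_of_homogeneous (isClosed_setOf_inHzPerp z)
    (fun t _ hh => InHzPerp.smul hh t) (continuous_E1form a c z) (E1form_smul a c z)
    fun h hh h0 => (E1form_nonneg hc z h).lt_of_ne' fun h' =>
      h0 (eq_zero_of_inHz_of_inHzPerp (hz h h') hh)

end Coercivity

section Bonds

variable {d N : ℕ}

lemma norm_sub_sub_le_of_norm_le {z x : Fin N → EuclideanSpace ℝ (Fin d)} {δ : ℝ}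
    (hx : ‖x - z‖ ≤ δ) (i j : Fin N) : ‖z i - z j‖ - 2 * δ ≤ ‖x i - x j‖ := by
  have hi : ‖x i - z i‖ ≤ δ := (norm_le_pi_norm (x - z) i).trans hx
  have hj : ‖x j - z j‖ ≤ δ := (norm_le_pi_norm (x - z) j).trans hx
  linarith [norm_sub_le_norm_sub_add_norm_sub (z i) (x i) (z j),
    norm_sub_le_norm_sub_add_norm_sub (x i) (x j) (z j), norm_sub_rev (z i) (x i)]

lemma E1form_sub_le_of_bond_lengths {a c : ℝ} (hc : 0 ≤ c)
    {z x : Fin N → EuclideanSpace ℝ (Fin d)}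
    (hbond : ∀ i j, i < j → ‖z i - z j‖ = a → ‖x i - x j‖ = a) :
    E1form a c z (x - z) ≤ c / a ^ 2 * (N ^ 2 * (4 * ‖x - z‖ ^ 4)) := by
  have hterm (i j : Fin N) : (if i < j ∧ ‖z i - z j‖ = a then
      inner ℝ ((x - z) i - (x - z) j) (z i - z j) ^ 2 else 0) ≤ 4 * ‖x - z‖ ^ 4 := by
    split_ifs with hij
    · have hlen : ‖(z i - z j) + ((x - z) i - (x - z) j)‖ = ‖z i - z j‖ := by
        rw [hij.2, ← hbond i j hij.1 hij.2]
        congr 1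
        simp only [Pi.sub_apply]
        abel
      have hdiff : ‖(x - z) i - (x - z) j‖ ≤ 2 * ‖x - z‖ := by
        linarith [norm_sub_le ((x - z) i) ((x - z) j), norm_le_pi_norm (x - z) i,
          norm_le_pi_norm (x - z) j]
      rw [real_inner_eq_neg_half_norm_sq_of_norm_add_eq hlen]
      have h4 := pow_le_pow_left₀ (norm_nonneg _) hdiff 4
      nlinarith
    · positivity
  calc E1form a c z (x - z) ≤ c / a ^ 2 * ∑ _i : Fin N, ∑ _j : Fin N, 4 * ‖x - z‖ ^ 4 := by
        unfold E1form
        gcongr with i _ j _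
        exact hterm i j
    _ = c / a ^ 2 * (N ^ 2 * (4 * ‖x - z‖ ^ 4)) := by
        simp only [Finset.sum_const, Finset.card_univ, Fintype.card_fin, nsmul_eq_mul]
        ring

lemma bond_lengths_eq_of_Ham_le {U : ℝ → ℝ} {a b δ : ℝ}
    {z x : Fin N → EuclideanSpace ℝ (Fin d)} (hz : IsCrystal a b z) (hUb : ∀ s, b < s → U s = 0)
    (hmin : ∀ r, 0 ≤ r → U a ≤ U r) (huniq : ∀ r, 0 < r → (∀ s, 0 ≤ s → U r ≤ U s) → r = a)
    (hδa : 2 * δ < a) (hδb : ∀ i j, b < ‖z i - z j‖ → 2 * δ < ‖z i - z j‖ - b)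
    (hx : ‖x - z‖ ≤ δ) (hH : Ham U x ≤ Ham U z) :
    ∀ i j, i < j → ‖z i - z j‖ = a → ‖x i - x j‖ = a := by
  have hpair (i j : Fin N) :
      (if i < j then U ‖z i - z j‖ else 0) ≤ if i < j then U ‖x i - x j‖ else 0 := by
    split_ifs with hij
    · rcases hz i j hij.ne with hbond | hfar
      · exact hbond ▸ hmin _ (norm_nonneg _)
      · have := norm_sub_sub_le_of_norm_le hx i j
        rw [hUb _ hfar, hUb _ (by linarith [hδb i j hfar])]
    · exact le_rfl
  have hsum := le_antisymm (Finset.sum_le_sum fun i _ => Finset.sum_le_sum fun j _ => hpair i j) hH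
  intro i j hij hbond
  have hU_eq : U ‖z i - z j‖ = U ‖x i - x j‖ := by
    have hrow := (Finset.sum_eq_sum_iff_of_le fun i _ => Finset.sum_le_sum fun j _ =>
      hpair i j).1 hsum i (Finset.mem_univ i)
    simpa [hij] using (Finset.sum_eq_sum_iff_of_le fun j _ => hpair i j).1 hrow j
      (Finset.mem_univ j)
  refine huniq _ ?_ fun s hs => ?_
  · linarith [norm_sub_sub_le_of_norm_le hx i j]
  · rw [← hU_eq, hbond]
    exact hmin s hs

end Bonds

theorem stmt7_general {d N : ℕ} (U : ℝ → ℝ) (a b c : ℝ)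
    (hUsupp : HasCompactSupport U)
    (ha : 0 < a) (hmin : ∀ r, 0 ≤ r → U a ≤ U r)
    (huniq : ∀ r, 0 < r → (∀ s, 0 ≤ s → U r ≤ U s) → r = a)
    (hcpos : 0 < c)
    (hb : b = sInf {r : ℝ | 0 < r ∧ ∀ s, r < s → U s = 0})
    (z : Fin N → EuclideanSpace ℝ (Fin d)) (hz : InfRigid a b c z) :
    ∃ δ : ℝ, 0 < δ ∧ ∀ x : Fin N → EuclideanSpace ℝ (Fin d),
      0 < distToOrbit z x → distToOrbit z x ≤ δ → Ham U z < Ham U x := by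
  obtain ⟨hcrys, hrigid⟩ := hz
  obtain ⟨lam, hlam, hcoer⟩ := exists_pos_mul_norm_sq_le_E1form hcpos.le fun h => (hrigid h).1
  set K := c / a ^ 2 * (N ^ 2 * 4)
  have hsmall : ∀ᶠ δ in 𝓝 (0 : ℝ), 2 * δ < a ∧ K * δ ^ 2 < lam ∧
      ∀ i j, b < ‖z i - z j‖ → 2 * δ < ‖z i - z j‖ - b :=
    (ContinuousAt.eventually_lt (by fun_prop) continuousAt_const (by simpa using ha)).and <|
      (ContinuousAt.eventually_lt (by fun_prop) continuousAt_const (by simpa using hlam)).and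
        (eventually_forall_two_mul_lt_sub (fun i j => ‖z i - z j‖) b)
  obtain ⟨δ, ⟨hδa, hδlam, hδb⟩, hδ⟩ :=
    ((hsmall.filter_mono (nhdsWithin_le_nhds (s := Set.Ioi 0))).and self_mem_nhdsWithin).exists
  refine ⟨δ, hδ, fun x hpos hle => ?_⟩
  obtain ⟨x', hiso, hnear, hdist⟩ := exists_congruent_isMinOn_orbitM z x
  have hnorm : ‖x' - z‖ ≤ δ := (hdist ▸ norm_le_sqrt_sum_norm_sq (x' - z)).trans hle
  have hne : 0 < ‖x' - z‖ := by
    refine norm_pos_iff.2 fun h0 => hpos.ne' ?_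
    simp [hdist, ← Pi.sub_apply, h0]
  rw [show Ham U x = Ham U x' by simp only [Ham, hiso]]
  by_contra! hH
  have hbond := bond_lengths_eq_of_Ham_le hcrys (fun s hs => hUsupp.eq_zero_of_sInf_lt (hb ▸ hs))
    hmin huniq hδa hδb hnorm hH
  have hK : 0 ≤ K := by positivity
  have : lam * ‖x' - z‖ ^ 2 < lam * ‖x' - z‖ ^ 2 := calc
    _ ≤ E1form a c z (x' - z) := hcoer _ (inHzPerp_sub_of_isMinOn hnear)
    _ ≤ K * ‖x' - z‖ ^ 2 * ‖x' - z‖ ^ 2 := by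
      convert E1form_sub_le_of_bond_lengths hcpos.le hbond using 1
      ring
    _ ≤ K * δ ^ 2 * ‖x' - z‖ ^ 2 := by gcongr
    _ < lam * ‖x' - z‖ ^ 2 := by gcongr
  exact lt_irrefl _ this

theorem stmt7 {d N : ℕ} (U : ℝ → ℝ) (a b c : ℝ)
    (hU : ContDiff ℝ 3 U) (hUsupp : HasCompactSupport U) (hUeven : ∀ r, U (-r) = U r)
    (ha : 0 < a) (hmin : ∀ r, 0 ≤ r → U a ≤ U r)
    (huniq : ∀ r, 0 < r → (∀ s, 0 ≤ s → U r ≤ U s) → r = a)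
    (hc : deriv (deriv U) a = c) (hcpos : 0 < c)
    (hb : b = sInf {r : ℝ | 0 < r ∧ ∀ s, r < s → U s = 0})
    (z : Fin N → EuclideanSpace ℝ (Fin d)) (hz : InfRigid a b c z) :
    ∃ δ : ℝ, 0 < δ ∧ ∀ x : Fin N → EuclideanSpace ℝ (Fin d),
      0 < distToOrbit z x → distToOrbit z x ≤ δ → Ham U z < Ham U x :=
  stmt7_general U a b c hUsupp ha hmin huniq hcpos hb z hz
end

section
/- Fix c₁ > 0. There exists a constant C > 0, depending only on U, c₁ and d, such that for every N and every x = (x_i)_{i=1}^N ∈ (ℝ^d)^N with |x_i − x_j| ≥ c₁ for all i ≠ j, one has |Σ_{i=1}^N Δ_{x_i} H(x)| ≤ C N, where Δ_{x_i} denotes the Laplacian with respect to the d coordinates of x_i. -/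
/-!
Moving the `i`-th particle only changes the terms `U ‖x_i - x_j‖`, so `Δ_{x_i} H` is the sum over
`j ≠ i` of the radial Laplacian `U''(r) + (d - 1) U'(r) / r` at `r = ‖x_i - x_j‖`. For `r ≥ c₁`
this is bounded, and it vanishes once `r` leaves the support of `U`. Since the points are
`c₁`-separated, disjoint balls of radius `c₁ / 3` around them show by volume comparison that only
boundedly many `x_j` lie within that range of `x_i`. Hence each `Δ_{x_i} H` is bounded
independently of `N`, and summing over `i` gives the bound `C N`.
-/

open Matrix

/-- Δ_{x_i} H(x): the Laplacian of H with respect to the d coordinates of the i-th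
particle, i.e. the sum over the coordinate directions α of the second derivative of H at
x along the α-th coordinate direction of the i-th particle. -/
noncomputable def lapHam {d N : ℕ} (U : ℝ → ℝ) (x : Fin N → EuclideanSpace ℝ (Fin d))
    (i : Fin N) : ℝ :=
  ∑ α : Fin d, iteratedDeriv 2
    (fun t : ℝ => Ham U (Function.update x i (x i + t • EuclideanSpace.single α (1 : ℝ)))) 0

open Finset Filter Topology Metric MeasureTheory Module
open scoped RealInnerProductSpace

section RadialCalculus

variable {F : Type*} [NormedAddCommGroup F] [InnerProductSpace ℝ F]

theorem HasDerivAt.norm {f : ℝ → F} {f' : F} {t : ℝ} (hf : HasDerivAt f f' t) (h0 : f t ≠ 0) :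
    HasDerivAt (fun s : ℝ => ‖f s‖) (⟪f t, f'⟫ / ‖f t‖) t := by
  have h := hf.norm_sq.sqrt (by positivity)
  simp only [Real.sqrt_sq (norm_nonneg _)] at h
  convert h using 1
  field_simp

theorem hasDerivAt_add_smul (v w : F) (t : ℝ) : HasDerivAt (fun s : ℝ => v + s • w) w t := by
  simpa using ((hasDerivAt_id t).smul_const w).const_add v

variable {f : ℝ → ℝ} {v w : F}

theorem hasDerivAt_comp_norm_add_smul (hf : Differentiable ℝ f) {t : ℝ} (h : v + t • w ≠ 0) :
    HasDerivAt (fun s : ℝ => f ‖v + s • w‖)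
      (deriv f ‖v + t • w‖ * (⟪v + t • w, w⟫ / ‖v + t • w‖)) t :=
  (hf _).hasDerivAt.comp t ((hasDerivAt_add_smul v w t).norm h)

theorem hasDerivAt_deriv_comp_norm_add_smul (hf : Differentiable ℝ (deriv f)) (hv : v ≠ 0) :
    HasDerivAt (fun s : ℝ => deriv f ‖v + s • w‖ * (⟪v + s • w, w⟫ / ‖v + s • w‖))
      (deriv (deriv f) ‖v‖ * (⟪v, w⟫ / ‖v‖) ^ 2
        + deriv f ‖v‖ * (‖w‖ ^ 2 - (⟪v, w⟫ / ‖v‖) ^ 2) / ‖v‖) 0 := by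
  have hline := hasDerivAt_add_smul v w 0
  have hv' : v + (0 : ℝ) • w ≠ 0 := by simpa using hv
  have hnorm := hline.norm hv'
  have h := (hasDerivAt_comp_norm_add_smul hf hv').fun_mul
    ((hline.inner ℝ (hasDerivAt_const 0 w)).fun_div hnorm (norm_ne_zero_iff.2 hv'))
  simp only [zero_smul, add_zero, real_inner_self_eq_norm_sq, inner_zero_right, zero_add] at h
  refine h.congr_deriv ?_
  have : ‖v‖ ≠ 0 := norm_ne_zero_iff.2 hv
  field_simp

theorem iteratedDeriv_two_comp_norm_add_smul (hf : ContDiff ℝ 2 f) (hv : v ≠ 0) :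
    iteratedDeriv 2 (fun s : ℝ => f ‖v + s • w‖) 0 =
      deriv (deriv f) ‖v‖ * (⟪v, w⟫ / ‖v‖) ^ 2
        + deriv f ‖v‖ * (‖w‖ ^ 2 - (⟪v, w⟫ / ‖v‖) ^ 2) / ‖v‖ := by
  have hne : ∀ᶠ s in 𝓝 (0 : ℝ), v + s • w ≠ 0 :=
    (hasDerivAt_add_smul v w 0).continuousAt.eventually_ne (by simpa using hv)
  have hderiv : deriv (fun s : ℝ => f ‖v + s • w‖) =ᶠ[𝓝 0]
      fun s : ℝ => deriv f ‖v + s • w‖ * (⟪v + s • w, w⟫ / ‖v + s • w‖) :=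
    hne.mono fun s hs => (hasDerivAt_comp_norm_add_smul (hf.differentiable two_ne_zero) hs).deriv
  rw [iteratedDeriv_succ, iteratedDeriv_one, hderiv.deriv_eq]
  exact (hasDerivAt_deriv_comp_norm_add_smul hf.differentiable_deriv_two hv).deriv

theorem contDiffAt_comp_norm_add_smul {n : WithTop ℕ∞} (hf : ContDiff ℝ n f) (hv : v ≠ 0) :
    ContDiffAt ℝ n (fun s : ℝ => f ‖v + s • w‖) 0 :=
  hf.contDiffAt.comp _ ((contDiffAt_norm ℝ (by simpa using hv)).comp _ (by fun_prop))

end RadialCalculus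

/-- The Laplacian of `v ↦ f ‖v‖` on `ℝ^d` at a point `v ≠ 0` of norm `r`. -/
noncomputable def radialLaplacian (d : ℕ) (f : ℝ → ℝ) (r : ℝ) : ℝ :=
  deriv (deriv f) r + (d - 1) / r * deriv f r

theorem sum_iteratedDeriv_two_comp_norm_add_single {d : ℕ} {f : ℝ → ℝ} (hf : ContDiff ℝ 2 f)
    {v : EuclideanSpace ℝ (Fin d)} (hv : v ≠ 0) :
    ∑ α, iteratedDeriv 2 (fun s : ℝ => f ‖v + s • EuclideanSpace.single α 1‖) 0 =
      radialLaplacian d f ‖v‖ := by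
  have hparseval : ∑ α, v α ^ 2 = ‖v‖ ^ 2 := by
    simp [EuclideanSpace.norm_sq_eq]
  have hr : ‖v‖ ≠ 0 := norm_ne_zero_iff.2 hv
  simp only [iteratedDeriv_two_comp_norm_add_smul hf hv, EuclideanSpace.inner_single_right,
    conj_trivial, PiLp.norm_single, norm_one, one_mul, one_pow, sum_add_distrib, ← mul_sum,
    sum_sub_distrib, div_pow, ← sum_div, hparseval, sum_const, card_univ, Fintype.card_fin,
    nsmul_eq_mul, radialLaplacian]
  field_simp

theorem hasCompactSupport_radialLaplacian (d : ℕ) {f : ℝ → ℝ} (hf : HasCompactSupport f) :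
    HasCompactSupport (radialLaplacian d f) :=
  hf.deriv.deriv.add (hf.deriv.mul_left (f := fun r : ℝ => ((d : ℝ) - 1) / r))

theorem exists_abs_radialLaplacian_le (d : ℕ) {f : ℝ → ℝ} (hf : ContDiff ℝ 2 f)
    (hsupp : HasCompactSupport f) {c : ℝ} (hc : 0 < c) :
    ∃ B, ∀ r, c ≤ r → |radialLaplacian d f r| ≤ B := by
  obtain ⟨M₁, hM₁⟩ := hsupp.deriv.exists_bound_of_continuous (hf.continuous_deriv one_le_two)
  obtain ⟨M₂, hM₂⟩ := hsupp.deriv.deriv.exists_bound_of_continuous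
    (hf.deriv' (n := 1)).continuous_deriv_one
  refine ⟨M₂ + |(d : ℝ) - 1| / c * M₁, fun r hr => ?_⟩
  have hr0 : 0 < r := hc.trans_le hr
  calc |radialLaplacian d f r|
      ≤ |deriv (deriv f) r| + |(d - 1) / r| * |deriv f r| := by
        rw [radialLaplacian, ← abs_mul]; exact abs_add_le _ _
    _ ≤ M₂ + |(d : ℝ) - 1| / c * M₁ := by
        rw [abs_div, abs_of_pos hr0]
        gcongr
        exacts [hM₂ r, hM₁ r]

theorem Finset.sum_sum_eq_add_sum_erase {ι M : Type*} [Fintype ι] [DecidableEq ι]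
    [AddCommMonoid M] (g : ι → ι → M) (i : ι) :
    ∑ a, ∑ b, g a b = g i i + ∑ j ∈ univ.erase i, (g i j + g j i) +
      ∑ a ∈ univ.erase i, ∑ b ∈ univ.erase i, g a b := by
  simp only [← add_sum_erase univ _ (mem_univ i), sum_add_distrib]
  abel

theorem Ham_update {d N : ℕ} (U : ℝ → ℝ) (x : Fin N → EuclideanSpace ℝ (Fin d)) (i : Fin N)
    (y : EuclideanSpace ℝ (Fin d)) :
    Ham U (Function.update x i y) =
      (∑ a ∈ univ.erase i, ∑ b ∈ univ.erase i, if a < b then U ‖x a - x b‖ else 0) +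
        ∑ j ∈ univ.erase i, U ‖y - x j‖ := by
  have hx : ∀ j ∈ univ.erase i, Function.update x i y j = x j := fun j hj =>
    Function.update_of_ne (ne_of_mem_erase hj) _ _
  rw [Ham, sum_sum_eq_add_sum_erase _ i]
  simp only [lt_irrefl, if_false, zero_add, Function.update_self]
  rw [add_comm]
  congr 1
  · exact sum_congr rfl fun a ha => sum_congr rfl fun b hb => by rw [hx a ha, hx b hb]
  · refine sum_congr rfl fun j hj => ?_
    rw [hx j hj, norm_sub_rev (x j)]
    rcases lt_or_gt_of_ne (ne_of_mem_erase hj) with h | h <;> simp [h, h.not_gt]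

theorem lapHam_eq_sum_radialLaplacian {d N : ℕ} {U : ℝ → ℝ} (hU : ContDiff ℝ 2 U)
    {x : Fin N → EuclideanSpace ℝ (Fin d)} {i : Fin N} (hx : ∀ j, j ≠ i → x i ≠ x j) :
    lapHam U x i = ∑ j ∈ univ.erase i, radialLaplacian d U ‖x i - x j‖ := by
  have hsub : ∀ j ∈ univ.erase i, x i - x j ≠ 0 := fun j hj =>
    sub_ne_zero.2 (hx j (ne_of_mem_erase hj))
  have hline : ∀ (α : Fin d) (t : ℝ),
      Ham U (Function.update x i (x i + t • EuclideanSpace.single α 1)) =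
        (∑ a ∈ univ.erase i, ∑ b ∈ univ.erase i, if a < b then U ‖x a - x b‖ else 0) +
          ∑ j ∈ univ.erase i, U ‖(x i - x j) + t • EuclideanSpace.single α 1‖ := by
    intro α t
    rw [Ham_update]
    congr 2 with j
    abel_nf
  simp only [lapHam, hline, iteratedDeriv_const_add two_pos]
  calc _ = ∑ α : Fin d, ∑ j ∈ univ.erase i,
        iteratedDeriv 2 (fun t : ℝ => U ‖(x i - x j) + t • EuclideanSpace.single α 1‖) 0 :=
      sum_congr rfl fun α _ => iteratedDeriv_fun_sum fun j hj =>
        contDiffAt_comp_norm_add_smul hU (hsub j hj)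
    _ = _ := by
      rw [sum_comm]
      exact sum_congr rfl fun j hj => sum_iteratedDeriv_two_comp_norm_add_single hU (hsub j hj)

theorem card_le_of_separated_of_subset_closedBall {E ι : Type*} [NormedAddCommGroup E]
    [NormedSpace ℝ E] [FiniteDimensional ℝ E] (s : Finset ι) (x : ι → E) (y : E) {c ρ : ℝ}
    (hc : 0 < c) (hρ : 0 ≤ ρ) (hsep : ∀ a ∈ s, ∀ b ∈ s, a ≠ b → c ≤ ‖x a - x b‖)
    (hs : ∀ a ∈ s, ‖x a - y‖ ≤ ρ) :
    (#s : ℝ) ≤ ((3 * ρ + c) / c) ^ finrank ℝ E := by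
  borelize E
  set μ : Measure E := Measure.addHaar
  have hdisj : (s : Set ι).PairwiseDisjoint fun a => closedBall (x a) (c / 3) :=
    fun a ha b hb hab => closedBall_disjoint_closedBall <| by
      rw [dist_eq_norm]; linarith [hsep a ha b hb hab]
  have hsub : ⋃ a ∈ s, closedBall (x a) (c / 3) ⊆ closedBall y (ρ + c / 3) :=
    Set.iUnion₂_subset fun a ha => closedBall_subset_closedBall' <| by
      rw [dist_eq_norm]; linarith [hs a ha]
  have hvol : #s * ((c / 3) ^ finrank ℝ E * μ.real (ball 0 1)) ≤
      (ρ + c / 3) ^ finrank ℝ E * μ.real (ball 0 1) :=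
    calc _ = ∑ a ∈ s, μ.real (closedBall (x a) (c / 3)) := by
          simp [Measure.addHaar_real_closedBall μ _ (by positivity : 0 ≤ c / 3)]
      _ = μ.real (⋃ a ∈ s, closedBall (x a) (c / 3)) :=
          (measureReal_biUnion_finset hdisj (fun _ _ => measurableSet_closedBall)
            fun _ _ => measure_closedBall_lt_top.ne).symm
      _ ≤ μ.real (closedBall y (ρ + c / 3)) := measureReal_mono hsub measure_closedBall_lt_top.ne
      _ = _ := Measure.addHaar_real_closedBall μ y (by positivity)
  have hball : 0 < μ.real (ball 0 1) := ENNReal.toReal_pos (measure_ball_pos μ 0 one_pos).ne' measure_ball_lt_top.ne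
  rw [← mul_assoc, mul_le_mul_iff_left₀ hball, ← le_div_iff₀ (by positivity), ← div_pow] at hvol
  refine hvol.trans_eq (congrArg (· ^ _) ?_)
  field_simp

theorem abs_sum_erase_comp_norm_sub_le {E ι : Type*} [NormedAddCommGroup E] [NormedSpace ℝ E]
    [FiniteDimensional ℝ E] [Fintype ι] [DecidableEq ι] (x : ι → E) {c R B : ℝ} (hc : 0 < c)
    (hR : 0 ≤ R) (hsep : ∀ a b, a ≠ b → c ≤ ‖x a - x b‖) {g : ℝ → ℝ}
    (hgB : ∀ r, c ≤ r → |g r| ≤ B) (hgR : ∀ r, R ≤ r → g r = 0) (i : ι) :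
    |∑ j ∈ univ.erase i, g ‖x i - x j‖| ≤ B * ((3 * R + c) / c) ^ finrank ℝ E := by
  set s := (univ.erase i).filter fun j => ‖x i - x j‖ < R
  have hsep_i : ∀ j ∈ univ.erase i, c ≤ ‖x i - x j‖ := fun j hj =>
    hsep i j (ne_of_mem_erase hj).symm
  have hcard : (#s : ℝ) ≤ ((3 * R + c) / c) ^ finrank ℝ E :=
    card_le_of_separated_of_subset_closedBall s x (x i) hc hR
      (fun a _ b _ hab => hsep a b hab)
      (fun j hj => by rw [norm_sub_rev]; exact (mem_filter.1 hj).2.le)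
  have hB : 0 ≤ B := (abs_nonneg _).trans (hgB c le_rfl)
  calc |∑ j ∈ univ.erase i, g ‖x i - x j‖| = |∑ j ∈ s, g ‖x i - x j‖| := by
        rw [sum_filter_of_ne fun j _ hj => not_le.1 fun h => hj (hgR _ h)]
    _ ≤ ∑ j ∈ s, |g ‖x i - x j‖| := abs_sum_le_sum_abs _ _
    _ ≤ ∑ j ∈ s, B := sum_le_sum fun j hj => hgB _ (hsep_i j (mem_filter.1 hj).1)
    _ = #s * B := by rw [sum_const, nsmul_eq_mul]
    _ ≤ _ := by rw [mul_comm]; gcongr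

theorem stmt11_general {d : ℕ} (U : ℝ → ℝ) (c₁ : ℝ)
    (hU : ContDiff ℝ 3 U) (hUsupp : HasCompactSupport U)
    (hc₁ : 0 < c₁) :
    ∃ C : ℝ, 0 < C ∧
      ∀ (N : ℕ) (x : Fin N → EuclideanSpace ℝ (Fin d)),
        (∀ i j : Fin N, i ≠ j → c₁ ≤ ‖x i - x j‖) →
        |∑ i : Fin N, lapHam U x i| ≤ C * N := by
  have hU₂ : ContDiff ℝ 2 U := hU.of_le (by norm_num)
  obtain ⟨B, hB⟩ := exists_abs_radialLaplacian_le d hU₂ hUsupp hc₁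
  obtain ⟨R, hR, hRzero⟩ := (hasCompactSupport_radialLaplacian d hUsupp).exists_pos_le_norm
  set K := B * ((3 * R + c₁) / c₁) ^ d
  refine ⟨max K 0 + 1, by positivity, fun N x hsep => ?_⟩
  have hlap : ∀ i, |lapHam U x i| ≤ K := fun i => by
    have hx : ∀ j, j ≠ i → x i ≠ x j := fun j hj hij => by
      have := hsep i j hj.symm
      rw [hij, sub_self, norm_zero] at this
      linarith
    rw [lapHam_eq_sum_radialLaplacian hU₂ hx]
    simpa using abs_sum_erase_comp_norm_sub_le x hc₁ hR.le hsep hB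
      (fun r hr => hRzero r (hr.trans (le_abs_self r))) i
  calc |∑ i, lapHam U x i| ≤ ∑ i, |lapHam U x i| := abs_sum_le_sum_abs _ _
    _ ≤ ∑ _i : Fin N, K := sum_le_sum fun i _ => hlap i
    _ ≤ (max K 0 + 1) * N := by
        rw [sum_const, card_univ, Fintype.card_fin, nsmul_eq_mul, mul_comm]
        gcongr
        linarith [le_max_left K 0]

theorem stmt11 {d : ℕ} (U : ℝ → ℝ) (c₁ : ℝ)
    (hU : ContDiff ℝ 3 U) (hUsupp : HasCompactSupport U) (hUeven : ∀ r, U (-r) = U r)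
    (hc₁ : 0 < c₁) :
    ∃ C : ℝ, 0 < C ∧
      ∀ (N : ℕ) (x : Fin N → EuclideanSpace ℝ (Fin d)),
        (∀ i j : Fin N, i ≠ j → c₁ ≤ ‖x i - x j‖) →
        |∑ i : Fin N, lapHam U x i| ≤ C * N :=
  stmt11_general U c₁ hU hUsupp hc₁
end
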